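/- arXiv:2409.04336 — 3 statements merged into one kernel-verified Lean document; each statement's English description precedes it below -/
import Mathlib

section
/- Let Q_∞ be the quadratic Cremona map of ℂ³ given by Q_∞(x,y,z) = (yz, xz, xy). Then there exists a nonzero constant c ∈ ℂ such that for every t ∈ ℂ one has the equality of polynomial 1-forms Q_∞^*(Ω + t·Ξ) = c·x²y²z²·(t·Ω + Ξ). (Hence, for t ≠ 0, the strict transform of the Lins Neto foliation ℱ_t under Q_∞ is ℱ_{1/t}.) -/
open MvPolynomial

noncomputable section

/-- τ = e^{2πi/3}, a primitive cube root of unity. -/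
def τ : ℂ := Complex.exp (2 * Real.pi * Complex.I / 3)

/-- The polynomial ring ℂ[x,y,z]. -/
abbrev R3 : Type := MvPolynomial (Fin 3) ℂ

def Xv : R3 := X 0
def Yv : R3 := X 1
def Zv : R3 := X 2

/-- The 1-form Ω (coefficients of dx, dy, dz). -/
def Om : Fin 3 → R3 :=
  ![Zv * (Yv - Zv) * (Zv ^ 2 + Yv ^ 2 + Yv * Zv) * Yv,
    -(Zv * (Xv - Zv) * (Xv ^ 2 + Zv * Xv + Zv ^ 2) * Xv),
    Xv * Yv * (Xv - Yv) * (Xv ^ 2 + Xv * Yv + Yv ^ 2)]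

/-- The 1-form Ξ (coefficients of dx, dy, dz). -/
def Xi : Fin 3 → R3 :=
  ![-((Yv - Zv) * (Zv ^ 2 + Yv ^ 2 + Yv * Zv) * Xv ^ 2),
    (Xv - Zv) * (Xv ^ 2 + Zv * Xv + Zv ^ 2) * Yv ^ 2,
    -(Zv ^ 2 * (Xv - Yv) * (Xv ^ 2 + Xv * Yv + Yv ^ 2))]

/-- Pullback of the 1-form ω by the polynomial map Q:
`Q^*ω := (A∘Q) dQ₁ + (B∘Q) dQ₂ + (C∘Q) dQ₃`. -/
def pullback (Q ω : Fin 3 → R3) : Fin 3 → R3 :=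
  fun i => ∑ j, aeval Q (ω j) * pderiv i (Q j)

def Qmap : Fin 3 → R3 := ![Yv * Zv, Xv * Zv, Xv * Yv]

lemma pd01 : pderiv (0:Fin 3) (X 1 : R3) = 0 := pderiv_X_of_ne (by decide)
lemma pd02 : pderiv (0:Fin 3) (X 2 : R3) = 0 := pderiv_X_of_ne (by decide)
lemma pd10 : pderiv (1:Fin 3) (X 0 : R3) = 0 := pderiv_X_of_ne (by decide)
lemma pd12 : pderiv (1:Fin 3) (X 2 : R3) = 0 := pderiv_X_of_ne (by decide)
lemma pd20 : pderiv (2:Fin 3) (X 0 : R3) = 0 := pderiv_X_of_ne (by decide)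
lemma pd21 : pderiv (2:Fin 3) (X 1 : R3) = 0 := pderiv_X_of_ne (by decide)

theorem stmt_3 : ∃ c : ℂ, c ≠ 0 ∧ ∀ t : ℂ,
    pullback Qmap (fun i => Om i + C t * Xi i) =
      fun i => C c * Xv ^ 2 * Yv ^ 2 * Zv ^ 2 * (C t * Om i + Xi i) := by
  refine ⟨-1, by norm_num, fun t => ?_⟩
  funext i
  fin_cases i <;>
  · simp only [Fin.isValue, Fin.mk_zero, Fin.mk_one, Fin.reduceFinMk, pullback, Qmap, Om, Xi,
      Xv, Yv, Zv, Fin.sum_univ_three,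
      Matrix.cons_val_zero, Matrix.cons_val_one, Matrix.head_cons,
      Matrix.cons_val_two, Matrix.tail_cons, map_add, map_mul, map_sub,
      map_neg, map_pow, aeval_X, aeval_C, algebraMap_eq, pderiv_mul,
      pderiv_X_self, pd01, pd02, pd10, pd12, pd20, pd21, mul_zero, mul_one, zero_sub,
      sub_zero, add_zero, zero_add, neg_zero, map_one, map_ofNat]
    ring
end
end

section
/- Let Q_∞(x,y,z) = (yz, xz, xy). Then in ℂ[x,y,z] one has the polynomial identity L₉(yz, xz, xy) = −x³y³z³·L₉(x,y,z); in particular the strict transform of the nine lines of the dual Hesse arrangement under Q_∞ is again the same set of nine lines. -/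
open MvPolynomial

noncomputable section

/-- The defining polynomial of the nine lines of the dual Hesse arrangement. -/
def L9 : R3 := (Xv ^ 3 - Zv ^ 3) * (Yv ^ 3 - Zv ^ 3) * (Xv ^ 3 - Yv ^ 3)

theorem stmt_7 : aeval Qmap L9 = -(Xv ^ 3 * Yv ^ 3 * Zv ^ 3) * L9 := by
  simp only [L9, Qmap, Xv, Yv, Zv, map_mul, map_sub, map_pow, aeval_X,
    Matrix.cons_val_zero, Matrix.cons_val_one, Matrix.head_cons, Matrix.cons_val_two, Matrix.tail_cons]
  ring
end
end

section
/- Let F := y³(x³−z³) and G := x³(y³−z³) in ℂ[x,y,z]. Then Ω ∧ (G·dF − F·dG) = 0, i.e. all three coefficient polynomials of this wedge vanish identically. In other words, F/G is a rational first integral of the Lins Neto foliation ℱ₀ (defined by Ω = 0), which is an elliptic pencil of sextics. -/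
open MvPolynomial

noncomputable section

/-- The coefficients of `ω ∧ η` all vanish. -/
def WedgeZero (ω η : Fin 3 → R3) : Prop :=
  ∀ i j : Fin 3, ω i * η j - ω j * η i = 0

/-- The 1-form `G·dF − F·dG`. -/
def pencilForm (F G : R3) : Fin 3 → R3 :=
  fun i => G * pderiv i F - F * pderiv i G

def Fpol : R3 := Yv ^ 3 * (Xv ^ 3 - Zv ^ 3)

def Gpol : R3 := Xv ^ 3 * (Yv ^ 3 - Zv ^ 3)

lemma key0 : pencilForm Fpol Gpol 0 = 3 * Xv^2 * Yv^2 * Zv^2 * Om 0 := by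
  simp only [pencilForm, Fpol, Gpol, Om, Xv, Yv, Zv,
      Matrix.cons_val_zero, Matrix.cons_val_one, Matrix.head_cons, Matrix.cons_val_two,
      Matrix.tail_cons, map_sub, pderiv_mul, pderiv_pow, pderiv_X_self,
      pderiv_X_of_ne (show (0:Fin 3) ≠ 1 by decide),
      pderiv_X_of_ne (show (0:Fin 3) ≠ 2 by decide),
      pderiv_X_of_ne (show (1:Fin 3) ≠ 0 by decide),
      pderiv_X_of_ne (show (1:Fin 3) ≠ 2 by decide),
      pderiv_X_of_ne (show (2:Fin 3) ≠ 0 by decide),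
      pderiv_X_of_ne (show (2:Fin 3) ≠ 1 by decide)]
  push_cast
  ring

lemma key1 : pencilForm Fpol Gpol 1 = 3 * Xv^2 * Yv^2 * Zv^2 * Om 1 := by
  simp only [pencilForm, Fpol, Gpol, Om, Xv, Yv, Zv,
      Matrix.cons_val_zero, Matrix.cons_val_one, Matrix.head_cons, Matrix.cons_val_two,
      Matrix.tail_cons, map_sub, pderiv_mul, pderiv_pow, pderiv_X_self,
      pderiv_X_of_ne (show (0:Fin 3) ≠ 1 by decide),
      pderiv_X_of_ne (show (0:Fin 3) ≠ 2 by decide),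
      pderiv_X_of_ne (show (1:Fin 3) ≠ 0 by decide),
      pderiv_X_of_ne (show (1:Fin 3) ≠ 2 by decide),
      pderiv_X_of_ne (show (2:Fin 3) ≠ 0 by decide),
      pderiv_X_of_ne (show (2:Fin 3) ≠ 1 by decide)]
  push_cast
  ring

lemma key2 : pencilForm Fpol Gpol 2 = 3 * Xv^2 * Yv^2 * Zv^2 * Om 2 := by
  simp only [pencilForm, Fpol, Gpol, Om, Xv, Yv, Zv,
      Matrix.cons_val_zero, Matrix.cons_val_one, Matrix.head_cons, Matrix.cons_val_two,
      Matrix.tail_cons, map_sub, pderiv_mul, pderiv_pow, pderiv_X_self,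
      pderiv_X_of_ne (show (0:Fin 3) ≠ 1 by decide),
      pderiv_X_of_ne (show (0:Fin 3) ≠ 2 by decide),
      pderiv_X_of_ne (show (1:Fin 3) ≠ 0 by decide),
      pderiv_X_of_ne (show (1:Fin 3) ≠ 2 by decide),
      pderiv_X_of_ne (show (2:Fin 3) ≠ 0 by decide),
      pderiv_X_of_ne (show (2:Fin 3) ≠ 1 by decide)]
  push_cast
  ring

lemma key : ∀ i, pencilForm Fpol Gpol i = 3 * Xv^2 * Yv^2 * Zv^2 * Om i := by
  intro i
  fin_cases i
  · exact key0
  · exact key1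
  · exact key2

theorem stmt_13 : WedgeZero (Om) (pencilForm Fpol Gpol) := by
  intro i j
  rw [key i, key j]
  ring
end
end
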